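/- arXiv:2512.04882 — 5 statements merged into one kernel-verified Lean document; each statement's English description precedes it below -/
import Mathlib

section
/- Fix real numbers α > 0, β > 0, γ ≠ 0; set σ = sgn(γ) ∈ {−1, 1} and v = √(|γ|/β), and let f : ℝ → ℝ be differentiable. For every u ∈ ℝ, the vectors r₁ = (0, 0, v, 1), r₂ = (−σ, f'(u), 0, 0), r₃ = (0, 0, −v, 1), r₄ = (1, α, 0, 0) in ℝ⁴ satisfy A(u) r₁ = −v r₁, A(u) r₂ = 0, A(u) r₃ = v r₃ and A(u) r₄ = (f'(u) + σα) r₄. If moreover v > 0 and α > |f'(u)|, then r₁, r₂, r₃, r₄ are linearly independent, so A(u) is diagonalizable over ℝ. -/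
/-- The Jacobian of the flux of the first-order hyperbolic approximate system. -/
noncomputable def fluxJacobian (α σ v : ℝ) (f : ℝ → ℝ) (u : ℝ) : Matrix (Fin 4) (Fin 4) ℝ :=
  !![deriv f u,     σ,     0, 0;
     α * deriv f u, α * σ, 0, 0;
     0,             0,     0, -v ^ 2;
     0,             0,     -1, 0]

/-!
`A(u)` is block diagonal: the block `[[f', σ], [α f', α σ]]` has rank one, with kernel spanned by
`(-σ, f')` and image spanned by `(1, α)`, on which it acts by its trace `f' + σα`; the block
`[[0, -v²], [-1, 0]]` has eigenvalues `∓v` with eigenvectors `(±v, 1)`. The matrix of the four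
eigenvectors has determinant `2v(f' + σα)`, which is nonzero because `|σ| = 1` and `|f'| < α`;
a basis of eigenvectors diagonalizes `A(u)` with the eigenvectors as the columns of `P`.
-/

namespace Matrix

variable {n R : Type*} [Fintype n] [DecidableEq n]

theorem mul_eq_mul_diagonal_of_mulVec_col [CommSemiring R] (A P : Matrix n n R) (d : n → R)
    (h : ∀ j, A *ᵥ P.col j = d j • P.col j) : A * P = P * diagonal d := by
  ext i j
  rw [mul_diagonal]
  simpa [mulVec, dotProduct, mul_apply, mul_comm] using congrFun (h j) i

theorem eq_mul_diagonal_mul_inv_of_linearIndependent_col {K : Type*} [Field K]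
    (A P : Matrix n n K) (d : n → K) (hP : LinearIndependent K P.col)
    (h : ∀ j, A *ᵥ P.col j = d j • P.col j) : IsUnit P.det ∧ A = P * diagonal d * P⁻¹ := by
  have hdet : IsUnit P.det := (isUnit_iff_isUnit_det P).mp (linearIndependent_cols_iff_isUnit.mp hP)
  refine ⟨hdet, ?_⟩
  rw [← mul_eq_mul_diagonal_of_mulVec_col A P d h, mul_nonsing_inv_cancel_right P A hdet]

end Matrix

section FluxJacobian

open Matrix

variable (α σ v d : ℝ)

def fluxEigenvectors : Fin 4 → Fin 4 → ℝ :=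
  ![![0, 0, v, 1], ![-σ, d, 0, 0], ![0, 0, -v, 1], ![1, α, 0, 0]]

def fluxEigenvalues : Fin 4 → ℝ :=
  ![-v, 0, v, d + σ * α]

theorem fluxJacobian_mulVec_fluxEigenvectors (f : ℝ → ℝ) (u : ℝ) (i : Fin 4) :
    fluxJacobian α σ v f u *ᵥ fluxEigenvectors α σ v (deriv f u) i
      = fluxEigenvalues α σ v (deriv f u) i • fluxEigenvectors α σ v (deriv f u) i := by
  funext j
  fin_cases i <;> fin_cases j <;>
    simp [fluxJacobian, fluxEigenvectors, fluxEigenvalues, mulVec, dotProduct, Fin.sum_univ_four] <;>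
    ring

theorem det_fluxEigenvectors :
    (Matrix.of (fluxEigenvectors α σ v d)).det = 2 * v * (d + σ * α) := by
  simp [fluxEigenvectors, det_succ_row_zero, Fin.sum_univ_succ, Fin.succAbove]
  ring

variable {α σ v d}

theorem linearIndependent_fluxEigenvectors (hσ : |σ| = 1) (hv : 0 < v) (hd : |d| < α) :
    LinearIndependent ℝ (fluxEigenvectors α σ v d) := by
  have htrace : d + σ * α ≠ 0 := by
    intro h
    have : |d| = |α| := by rw [eq_neg_of_add_eq_zero_left h, abs_neg, abs_mul, hσ, one_mul]
    linarith [le_abs_self α]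
  have hdet : (Matrix.of (fluxEigenvectors α σ v d)).det ≠ 0 := by
    rw [det_fluxEigenvectors]
    exact mul_ne_zero (mul_ne_zero two_ne_zero hv.ne') htrace
  exact linearIndependent_rows_iff_isUnit.mpr ((isUnit_iff_isUnit_det _).mpr hdet.isUnit)

end FluxJacobian

theorem right_eigenvectors_of_fluxJacobian_general
    (α γ σ v : ℝ) (hγ : γ ≠ 0)
    (hσ : σ = Real.sign γ)
    (f : ℝ → ℝ) (u : ℝ) :
    (fluxJacobian α σ v f u).mulVec ![0, 0, v, 1] = (-v) • ![0, 0, v, 1] ∧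
    (fluxJacobian α σ v f u).mulVec ![-σ, deriv f u, 0, 0] = 0 ∧
    (fluxJacobian α σ v f u).mulVec ![0, 0, -v, 1] = v • ![0, 0, -v, 1] ∧
    (fluxJacobian α σ v f u).mulVec ![1, α, 0, 0]
        = (deriv f u + σ * α) • ![1, α, 0, 0] ∧
    (0 < v → |deriv f u| < α →
      LinearIndependent ℝ
        ![(![0, 0, v, 1] : Fin 4 → ℝ), ![-σ, deriv f u, 0, 0], ![0, 0, -v, 1], ![1, α, 0, 0]] ∧
      ∃ (P : Matrix (Fin 4) (Fin 4) ℝ) (d : Fin 4 → ℝ),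
        IsUnit P.det ∧ fluxJacobian α σ v f u = P * Matrix.diagonal d * P⁻¹) := by
  have heigen := fluxJacobian_mulVec_fluxEigenvectors α σ v f u
  have hσ_abs : |σ| = 1 := by
    rcases Real.sign_apply_eq_of_ne_zero γ hγ with h | h <;> simp [hσ, h]
  refine ⟨heigen 0, (heigen 1).trans (zero_smul ℝ _), heigen 2, heigen 3, fun hv hf' => ?_⟩
  have hindep := linearIndependent_fluxEigenvectors hσ_abs hv hf'
  obtain ⟨hdet, hdiag⟩ := Matrix.eq_mul_diagonal_mul_inv_of_linearIndependent_col _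
    (Matrix.of (fluxEigenvectors α σ v (deriv f u))).transpose _ hindep heigen
  exact ⟨hindep, _, _, hdet, hdiag⟩

/-- the vectors `r₁ = (0,0,v,1)`, `r₂ = (-σ, f'(u),0,0)`, `r₃ = (0,0,-v,1)`,
`r₄ = (1,α,0,0)` are right eigenvectors of `A(u)` for the eigenvalues `-v, 0, v, f'(u)+σα`;
if moreover `v > 0` and `α > |f'(u)|` they are linearly independent, hence `A(u)` is
diagonalizable over `ℝ`. -/
theorem right_eigenvectors_of_fluxJacobian
    (α β γ σ v : ℝ) (hα : 0 < α) (hβ : 0 < β) (hγ : γ ≠ 0)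
    (hσ : σ = Real.sign γ) (hv : v = Real.sqrt (|γ| / β))
    (f : ℝ → ℝ) (hf : Differentiable ℝ f) (u : ℝ) :
    (fluxJacobian α σ v f u).mulVec ![0, 0, v, 1] = (-v) • ![0, 0, v, 1] ∧
    (fluxJacobian α σ v f u).mulVec ![-σ, deriv f u, 0, 0] = 0 ∧
    (fluxJacobian α σ v f u).mulVec ![0, 0, -v, 1] = v • ![0, 0, -v, 1] ∧
    (fluxJacobian α σ v f u).mulVec ![1, α, 0, 0]
        = (deriv f u + σ * α) • ![1, α, 0, 0] ∧
    (0 < v → |deriv f u| < α →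
      LinearIndependent ℝ
        ![(![0, 0, v, 1] : Fin 4 → ℝ), ![-σ, deriv f u, 0, 0], ![0, 0, -v, 1], ![1, α, 0, 0]] ∧
      ∃ (P : Matrix (Fin 4) (Fin 4) ℝ) (d : Fin 4 → ℝ),
        IsUnit P.det ∧ fluxJacobian α σ v f u = P * Matrix.diagonal d * P⁻¹) :=
  right_eigenvectors_of_fluxJacobian_general α γ σ v hγ hσ f u
end

section
/- Fix real numbers α > 0, β > 0, γ ≠ 0; set σ = sgn(γ) ∈ {−1, 1} and v = √(|γ|/β), and let f : ℝ → ℝ be differentiable. Define the Riemann invariants R₁(u,ψ,w,p) = w + v p, R₂(u,ψ,w,p) = α u − ψ, R₃(u,ψ,w,p) = w − v p, R₄(u,ψ,w,p) = σ f(u) + ψ on ℝ⁴. Then for every U = (u,ψ,w,p) ∈ ℝ⁴ and each i ∈ {1,2,3,4}, the gradient ∇Rᵢ(U) is a left eigenvector of A(u) for the eigenvalue λᵢ, where λ₁ = −v, λ₂ = 0, λ₃ = v, λ₄ = f'(u) + σα; explicitly, the row vectors (0,0,1,v), (α,−1,0,0), (0,0,1,−v), (σ f'(u),1,0,0) satisfy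 ℓᵢ A(u) = λᵢ ℓᵢ. -/
open Matrix

theorem Real.sign_mul_self_of_ne_zero {r : ℝ} (hr : r ≠ 0) : Real.sign r * Real.sign r = 1 := by
  calc Real.sign r * Real.sign r = Real.sign r * (Real.sign r)⁻¹ := by rw [Real.inv_sign]
    _ = 1 := mul_inv_cancel₀ (Real.sign_eq_zero_iff.not.mpr hr)

section

variable (α σ v : ℝ) (f : ℝ → ℝ) (u : ℝ)

theorem vecMul_fluxJacobian (a b c d : ℝ) :
    vecMul ![a, b, c, d] (fluxJacobian α σ v f u) =
      ![(a + α * b) * deriv f u, (a + α * b) * σ, -d, -(v ^ 2 * c)] := by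
  ext i
  fin_cases i <;>
    simp only [vecMul, dotProduct, fluxJacobian, Fin.sum_univ_four, of_apply, cons_val', cons_val,
      cons_val_zero, cons_val_one, cons_val_fin_one, Fin.isValue, Fin.zero_eta, Fin.mk_one,
      Fin.reduceFinMk] <;>
    ring

theorem vecMul_fluxJacobian_wave {s : ℝ} (hs : s ^ 2 = v ^ 2) :
    vecMul ![0, 0, 1, s] (fluxJacobian α σ v f u) = (-s) • ![0, 0, 1, s] := by
  rw [vecMul_fluxJacobian]
  ext i
  fin_cases i <;> simp [← hs, sq]

theorem vecMul_fluxJacobian_annihilator :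
    vecMul ![α, -1, 0, 0] (fluxJacobian α σ v f u) = (0 : ℝ) • ![α, -1, 0, 0] := by
  rw [vecMul_fluxJacobian]
  ext i
  fin_cases i <;> simp

theorem vecMul_fluxJacobian_transport (hσ : σ * σ = 1) :
    vecMul ![σ * deriv f u, 1, 0, 0] (fluxJacobian α σ v f u) =
      (deriv f u + σ * α) • ![σ * deriv f u, 1, 0, 0] := by
  rw [vecMul_fluxJacobian]
  ext i
  fin_cases i
  · simp only [Fin.zero_eta, cons_val_zero, Pi.smul_apply, smul_eq_mul, mul_one]
    linear_combination -α * deriv f u * hσ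
  · simp only [Fin.mk_one, cons_val_one, cons_val_zero, Pi.smul_apply, smul_eq_mul, mul_one]
    linear_combination deriv f u * hσ
  all_goals simp

end

theorem left_eigenvectors_of_fluxJacobian_general
    (α γ σ v : ℝ) (hγ : γ ≠ 0)
    (hσ : σ = Real.sign γ)
    (f : ℝ → ℝ) (u : ℝ) :
    (![0, 0, 1, v] : Fin 4 → ℝ) ≠ 0 ∧
      Matrix.vecMul ![0, 0, 1, v] (fluxJacobian α σ v f u) = (-v) • ![0, 0, 1, v] ∧
    (![α, -1, 0, 0] : Fin 4 → ℝ) ≠ 0 ∧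
      Matrix.vecMul ![α, -1, 0, 0] (fluxJacobian α σ v f u) = (0 : ℝ) • ![α, -1, 0, 0] ∧
    (![0, 0, 1, -v] : Fin 4 → ℝ) ≠ 0 ∧
      Matrix.vecMul ![0, 0, 1, -v] (fluxJacobian α σ v f u) = v • ![0, 0, 1, -v] ∧
    (![σ * deriv f u, 1, 0, 0] : Fin 4 → ℝ) ≠ 0 ∧
      Matrix.vecMul ![σ * deriv f u, 1, 0, 0] (fluxJacobian α σ v f u)
        = (deriv f u + σ * α) • ![σ * deriv f u, 1, 0, 0] := by
  have hσσ : σ * σ = 1 := hσ ▸ Real.sign_mul_self_of_ne_zero hγ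
  have hwave_neg := vecMul_fluxJacobian_wave α σ v f u (neg_sq v)
  rw [neg_neg] at hwave_neg
  exact ⟨by simp, vecMul_fluxJacobian_wave α σ v f u rfl,
    by simp, vecMul_fluxJacobian_annihilator α σ v f u,
    by simp, hwave_neg,
    by simp, vecMul_fluxJacobian_transport α σ v f u hσσ⟩

/-- the gradients of the Riemann invariants `R₁ = w + v p`, `R₂ = α u - ψ`,
`R₃ = w - v p`, `R₄ = σ f(u) + ψ`, i.e. the row vectors `(0,0,1,v)`, `(α,-1,0,0)`,
`(0,0,1,-v)`, `(σ f'(u),1,0,0)`, are left eigenvectors of `A(u)` for the eigenvalues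
`λ₁ = -v`, `λ₂ = 0`, `λ₃ = v`, `λ₄ = f'(u) + σα`: they are nonzero and satisfy
`ℓᵢ A(u) = λᵢ ℓᵢ`. -/
theorem left_eigenvectors_of_fluxJacobian
    (α β γ σ v : ℝ) (hα : 0 < α) (hβ : 0 < β) (hγ : γ ≠ 0)
    (hσ : σ = Real.sign γ) (hv : v = Real.sqrt (|γ| / β))
    (f : ℝ → ℝ) (hf : Differentiable ℝ f) (u ψ w p : ℝ) :
    (![0, 0, 1, v] : Fin 4 → ℝ) ≠ 0 ∧
      Matrix.vecMul ![0, 0, 1, v] (fluxJacobian α σ v f u) = (-v) • ![0, 0, 1, v] ∧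
    (![α, -1, 0, 0] : Fin 4 → ℝ) ≠ 0 ∧
      Matrix.vecMul ![α, -1, 0, 0] (fluxJacobian α σ v f u) = (0 : ℝ) • ![α, -1, 0, 0] ∧
    (![0, 0, 1, -v] : Fin 4 → ℝ) ≠ 0 ∧
      Matrix.vecMul ![0, 0, 1, -v] (fluxJacobian α σ v f u) = v • ![0, 0, 1, -v] ∧
    (![σ * deriv f u, 1, 0, 0] : Fin 4 → ℝ) ≠ 0 ∧
      Matrix.vecMul ![σ * deriv f u, 1, 0, 0] (fluxJacobian α σ v f u)
        = (deriv f u + σ * α) • ![σ * deriv f u, 1, 0, 0] :=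
  left_eigenvectors_of_fluxJacobian_general α γ σ v hγ hσ f u
end

section
/- Fix real numbers α > 0, β > 0, γ ≠ 0; set σ = sgn(γ) ∈ {−1, 1} and v = √(|γ|/β). Let f : ℝ → ℝ be C¹ and let u : ℝ × ℝ → ℝ be four times continuously differentiable satisfying pointwise the dispersive equation ∂_t u + ∂_x(f(u)) = γ ∂_x³ u. Define U = (u, ψ, w, p) with ψ = −|γ| ∂_x² u, w = ∂_t u, p = ∂_x u. Then U satisfies pointwise the hyperbolic approximate system up to explicit residual terms: ∂_t u + ∂_x(f(u) + σψ) = 0; ∂_t ψ + α ∂_x(f(u) + σψ) = −α w − |γ| ∂_t ∂_x² u; β ∂_t w − |γ| ∂_x p = ψ + β ∂_t² u; ∂_t p − ∂_x w = 0. -/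
/-- Partial derivative in the first (spatial) variable. -/
noncomputable def pdx (g : ℝ → ℝ → ℝ) (x t : ℝ) : ℝ := deriv (fun y => g y t) x

/-- Partial derivative in the second (temporal) variable. -/
noncomputable def pdt (g : ℝ → ℝ → ℝ) (x t : ℝ) : ℝ := deriv (fun s => g x s) t

/-!
Since `σ |γ| = γ`, the flux `f(u) + σψ` with `ψ = -|γ| u_xx` has `x`-derivative
`f(u)_x - γ u_xxx`. Hence the first equation is the dispersive equation itself, the second is
`ψ_t` plus `α` times the first, the third is an algebraic identity, and the fourth is the
symmetry of the mixed second partial derivatives of the `C²` function `u`.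
-/

open Function

theorem Real.sign_mul_abs (r : ℝ) : Real.sign r * |r| = r := by
  rcases lt_trichotomy r 0 with hr | rfl | hr
  · rw [Real.sign_of_neg hr, abs_of_neg hr]; ring
  · simp
  · rw [Real.sign_of_pos hr, abs_of_pos hr]; ring

section PartialDerivatives

variable {g h : ℝ → ℝ → ℝ} {x t : ℝ}

theorem hasDerivAt_slice_fst (hg : DifferentiableAt ℝ (uncurry g) (x, t)) :
    HasDerivAt (fun y => g y t) (fderiv ℝ (uncurry g) (x, t) (1, 0)) x := by
  exact hg.hasFDerivAt.comp_hasDerivAt x ((hasDerivAt_id' x).prodMk (hasDerivAt_const x t))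

theorem hasDerivAt_slice_snd (hg : DifferentiableAt ℝ (uncurry g) (x, t)) :
    HasDerivAt (fun s => g x s) (fderiv ℝ (uncurry g) (x, t) (0, 1)) t := by
  exact hg.hasFDerivAt.comp_hasDerivAt t ((hasDerivAt_const t x).prodMk (hasDerivAt_id' t))

theorem pdx_eq_fderiv (hg : DifferentiableAt ℝ (uncurry g) (x, t)) :
    pdx g x t = fderiv ℝ (uncurry g) (x, t) (1, 0) :=
  (hasDerivAt_slice_fst hg).deriv

theorem pdt_eq_fderiv (hg : DifferentiableAt ℝ (uncurry g) (x, t)) :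
    pdt g x t = fderiv ℝ (uncurry g) (x, t) (0, 1) :=
  (hasDerivAt_slice_snd hg).deriv

theorem uncurry_pdx (hg : Differentiable ℝ (uncurry g)) :
    uncurry (pdx g) = fun p => fderiv ℝ (uncurry g) p (1, 0) :=
  funext fun p => pdx_eq_fderiv (hg p)

theorem uncurry_pdt (hg : Differentiable ℝ (uncurry g)) :
    uncurry (pdt g) = fun p => fderiv ℝ (uncurry g) p (0, 1) :=
  funext fun p => pdt_eq_fderiv (hg p)

theorem ContDiff.uncurry_pdx {m n : WithTop ℕ∞} (hg : ContDiff ℝ n (uncurry g))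
    (hmn : m + 1 ≤ n) : ContDiff ℝ m (uncurry (pdx g)) := by
  rw [_root_.uncurry_pdx ((hg.of_le (le_add_self.trans hmn)).differentiable one_ne_zero)]
  exact (hg.fderiv_right hmn).clm_apply contDiff_const

theorem pdt_pdx_eq_pdx_pdt (hg : ContDiff ℝ 2 (uncurry g)) :
    pdt (pdx g) x t = pdx (pdt g) x t := by
  have hdiff : Differentiable ℝ (uncurry g) := hg.differentiable two_ne_zero
  have hdiff2 : Differentiable ℝ (fderiv ℝ (uncurry g)) :=
    (hg.fderiv_right (m := 1) (by norm_num)).differentiable one_ne_zero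
  have hpdx : Differentiable ℝ (uncurry (pdx g)) := by
    rw [uncurry_pdx hdiff]; exact hdiff2.clm_apply (differentiable_const _)
  have hpdt : Differentiable ℝ (uncurry (pdt g)) := by
    rw [uncurry_pdt hdiff]; exact hdiff2.clm_apply (differentiable_const _)
  rw [pdt_eq_fderiv (hpdx _), pdx_eq_fderiv (hpdt _), uncurry_pdx hdiff, uncurry_pdt hdiff,
    fderiv_clm_apply (hdiff2 _) (differentiableAt_const _),
    fderiv_clm_apply (hdiff2 _) (differentiableAt_const _)]
  simpa using ((hg.contDiffAt (x := (x, t))).isSymmSndFDerivAt (by simp)) (0, 1) (1, 0)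

theorem pdx_add (hg : DifferentiableAt ℝ (fun y => g y t) x)
    (hh : DifferentiableAt ℝ (fun y => h y t) x) :
    pdx (fun y s => g y s + h y s) x t = pdx g x t + pdx h x t :=
  deriv_fun_add hg hh

theorem pdx_const_mul (c : ℝ) : pdx (fun y s => c * g y s) x t = c * pdx g x t :=
  deriv_const_mul_field c

theorem pdx_neg : pdx (fun y s => -g y s) x t = -pdx g x t :=
  deriv.fun_neg

theorem pdt_const_mul (c : ℝ) : pdt (fun y s => c * g y s) x t = c * pdt g x t :=
  deriv_const_mul_field c

theorem pdt_neg : pdt (fun y s => -g y s) x t = -pdt g x t :=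
  deriv.fun_neg

end PartialDerivatives

theorem dispersive_solution_satisfies_approximate_system_with_residuals_general
    (α β γ σ : ℝ)
    (hσ : σ = Real.sign γ)
    (f : ℝ → ℝ) (hf : ContDiff ℝ 1 f)
    (u : ℝ → ℝ → ℝ) (hu : ContDiff ℝ 4 (Function.uncurry u))
    (hpde : ∀ x t, pdt u x t + pdx (fun y s => f (u y s)) x t
      = γ * pdx (pdx (pdx u)) x t) :
    (∀ x t, pdt u x t
        + pdx (fun y s => f (u y s) + σ * (-(|γ| * pdx (pdx u) y s))) x t = 0) ∧
    (∀ x t, pdt (fun y s => -(|γ| * pdx (pdx u) y s)) x t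
        + α * pdx (fun y s => f (u y s) + σ * (-(|γ| * pdx (pdx u) y s))) x t
        = -(α * pdt u x t) - |γ| * pdt (pdx (pdx u)) x t) ∧
    (∀ x t, β * pdt (pdt u) x t - |γ| * pdx (pdx u) x t
        = -(|γ| * pdx (pdx u) x t) + β * pdt (pdt u) x t) ∧
    (∀ x t, pdt (pdx u) x t - pdx (pdt u) x t = 0) := by
  have hσγ : σ * |γ| = γ := hσ ▸ Real.sign_mul_abs γ
  have huxx : ContDiff ℝ 1 (uncurry (pdx (pdx u))) :=
    (hu.uncurry_pdx (m := 3) (by norm_num)).uncurry_pdx (by norm_num)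
  have hflux : ∀ x t, pdx (fun y s => f (u y s) + σ * (-(|γ| * pdx (pdx u) y s))) x t
      = pdx (fun y s => f (u y s)) x t - γ * pdx (pdx (pdx u)) x t := by
    intro x t
    have hfu : DifferentiableAt ℝ (fun y => f (u y t)) x :=
      (hf.differentiable one_ne_zero _).comp x
        (hasDerivAt_slice_fst ((hu.differentiable (by norm_num)) (x, t))).differentiableAt
    have hψ : DifferentiableAt ℝ (fun y => σ * -(|γ| * pdx (pdx u) y t)) x :=
      ((hasDerivAt_slice_fst (huxx.differentiable one_ne_zero (x, t))).differentiableAt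
        |>.const_mul _ |>.neg |>.const_mul _)
    rw [pdx_add hfu hψ, pdx_const_mul, pdx_neg, pdx_const_mul]
    linear_combination -pdx (pdx (pdx u)) x t * hσγ
  refine ⟨fun x t => ?_, fun x t => ?_, fun x t => by ring,
    fun x t => sub_eq_zero.2 (pdt_pdx_eq_pdx_pdt (hu.of_le (by norm_num)))⟩
  · linear_combination hflux x t + hpde x t
  · rw [pdt_neg, pdt_const_mul, hflux]
    linear_combination α * hpde x t

/-- a `C⁴` solution `u` of the dispersive equation `u_t + f(u)_x = γ u_xxx`
induces, via `ψ = -|γ| u_xx`, `w = u_t`, `p = u_x`, a solution of the hyperbolic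
approximate system up to the explicit residual terms `-|γ| ∂ₜ∂ₓ²u` and `β ∂ₜ²u`. -/
theorem dispersive_solution_satisfies_approximate_system_with_residuals
    (α β γ σ v : ℝ) (hα : 0 < α) (hβ : 0 < β) (hγ : γ ≠ 0)
    (hσ : σ = Real.sign γ) (hv : v = Real.sqrt (|γ| / β))
    (f : ℝ → ℝ) (hf : ContDiff ℝ 1 f)
    (u : ℝ → ℝ → ℝ) (hu : ContDiff ℝ 4 (Function.uncurry u))
    (hpde : ∀ x t, pdt u x t + pdx (fun y s => f (u y s)) x t
      = γ * pdx (pdx (pdx u)) x t) :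
    (∀ x t, pdt u x t
        + pdx (fun y s => f (u y s) + σ * (-(|γ| * pdx (pdx u) y s))) x t = 0) ∧
    (∀ x t, pdt (fun y s => -(|γ| * pdx (pdx u) y s)) x t
        + α * pdx (fun y s => f (u y s) + σ * (-(|γ| * pdx (pdx u) y s))) x t
        = -(α * pdt u x t) - |γ| * pdt (pdx (pdx u)) x t) ∧
    (∀ x t, β * pdt (pdt u) x t - |γ| * pdx (pdx u) x t
        = -(|γ| * pdx (pdx u) x t) + β * pdt (pdt u) x t) ∧
    (∀ x t, pdt (pdx u) x t - pdx (pdt u) x t = 0) :=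
  dispersive_solution_satisfies_approximate_system_with_residuals_general α β γ σ hσ f hf u hu hpde
end

section
/- Fix real numbers α > 0, γ ≠ 0, ε > 0; set σ = sgn(γ) ∈ {−1, 1}. Let f : ℝ → ℝ be differentiable and let u ∈ ℝ with f'(u) ≠ 0. Define the 4×4 real matrices S₁(u) with rows (σ f'(u)², f'(u), 0, 0), (f'(u), σ, 0, 0), (0, 0, 0, −|γ|), (0, 0, −|γ|, 0), and S₂(u) = diag(ε σ f'(u), ε/α, 0, ε |γ|). Then (i) the kernel of S₂(u) equals the span of e₃ = (0,0,1,0); and (ii) for every λ ∈ ℝ and every x ∈ ℝ⁴, if S₂(u) x = 0 and S₁(u) x = λ x then x = 0; i.e., no eigenvector of S₁(u) lies in the kernel of S₂(u) (the Shizuta–Kawashima coupling condition). -/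
/-!
The diffusion matrix `S₂(u)` is diagonal with a single vanishing entry, the third one, so its
kernel is the line through `e₃`. Since `S₁(u) e₃ = -|γ| e₄` is not a multiple of `e₃`, no
nonzero vector of that line is an eigenvector of `S₁(u)`.
-/

namespace Matrix

variable {n R : Type*} [Fintype n] [DecidableEq n]

theorem diagonal_mulVec_eq_zero_iff_exists_smul_single [Semiring R] [NoZeroDivisors R]
    {d : n → R} {j : n} (hdj : d j = 0) (hd : ∀ i, i ≠ j → d i ≠ 0) (x : n → R) :
    diagonal d *ᵥ x = 0 ↔ ∃ c : R, x = c • Pi.single j 1 := by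
  constructor
  · intro hx
    refine ⟨x j, funext fun i => ?_⟩
    by_cases hij : i = j
    · subst hij
      simp
    · have hdx : d i * x i = 0 := by simpa [mulVec_diagonal] using congrFun hx i
      simpa [hij] using (mul_eq_zero.mp hdx).resolve_left (hd i hij)
  · rintro ⟨c, rfl⟩
    funext i
    by_cases hij : i = j
    · subst hij
      simp [mulVec_diagonal, hdj]
    · simp [mulVec_diagonal, hij]

theorem eq_zero_of_mulVec_smul_single_eq_smul [CommSemiring R] [NoZeroDivisors R]
    {A : Matrix n n R} {j k : n} (hkj : k ≠ j) (hA : A k j ≠ 0) {lam c : R}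
    (hev : A *ᵥ (c • Pi.single j 1) = lam • c • Pi.single j 1) : c = 0 := by
  have hk : c * A k j = 0 := by
    simpa [mulVec_smul, mulVec_single, hkj, mul_comm] using congrFun hev k
  exact (mul_eq_zero.mp hk).resolve_right hA

end Matrix

open Matrix in
theorem shizuta_kawashima_condition_general
    (α γ ε σ : ℝ) (hα : 0 < α) (hγ : γ ≠ 0) (hε : 0 < ε)
    (hσ : σ = Real.sign γ)
    (f : ℝ → ℝ) (u : ℝ) (hfu : deriv f u ≠ 0) :
    (∀ x : Fin 4 → ℝ,
      (Matrix.diagonal ![ε * (σ * deriv f u), ε / α, 0, ε * |γ|]).mulVec x = 0 ↔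
        ∃ c : ℝ, x = c • ![0, 0, 1, 0]) ∧
    (∀ (lam : ℝ) (x : Fin 4 → ℝ),
      (Matrix.diagonal ![ε * (σ * deriv f u), ε / α, 0, ε * |γ|]).mulVec x = 0 →
      (!![σ * (deriv f u) ^ 2, deriv f u, 0, 0;
          deriv f u,           σ,         0, 0;
          0,                   0,         0, -|γ|;
          0,                   0,         -|γ|, 0] : Matrix (Fin 4) (Fin 4) ℝ).mulVec x
        = lam • x →
      x = 0) := by
  have hσ0 : σ ≠ 0 := by simp [hσ, Real.sign_eq_zero_iff, hγ]
  have he₃ : (![0, 0, 1, 0] : Fin 4 → ℝ) = Pi.single 2 1 := by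
    ext i
    fin_cases i <;> rfl
  have hker : ∀ x : Fin 4 → ℝ,
      diagonal ![ε * (σ * deriv f u), ε / α, 0, ε * |γ|] *ᵥ x = 0 ↔
        ∃ c : ℝ, x = c • ![0, 0, 1, 0] := by
    rw [he₃]
    refine diagonal_mulVec_eq_zero_iff_exists_smul_single rfl fun i hi => ?_
    fin_cases i <;> simp_all [hε.ne', hα.ne']
  refine ⟨hker, fun lam x hx hev => ?_⟩
  obtain ⟨c, rfl⟩ := (hker x).mp hx
  rw [he₃] at hev ⊢
  have hc : c = 0 :=
    eq_zero_of_mulVec_smul_single_eq_smul (k := 3) (by decide) (by simpa using hγ) hev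
  simp [hc]

/-- with `S₁(u)` the symmetrized flux matrix and
`S₂(u) = diag(ε σ f'(u), ε/α, 0, ε|γ|)` the symmetrized diffusion matrix, and `f'(u) ≠ 0`:
(i) the kernel of `S₂(u)` is exactly the span of `e₃ = (0,0,1,0)`; and
(ii) no eigenvector of `S₁(u)` lies in the kernel of `S₂(u)` (Shizuta–Kawashima). -/
theorem shizuta_kawashima_condition
    (α γ ε σ : ℝ) (hα : 0 < α) (hγ : γ ≠ 0) (hε : 0 < ε)
    (hσ : σ = Real.sign γ)
    (f : ℝ → ℝ) (hf : Differentiable ℝ f) (u : ℝ) (hfu : deriv f u ≠ 0) :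
    (∀ x : Fin 4 → ℝ,
      (Matrix.diagonal ![ε * (σ * deriv f u), ε / α, 0, ε * |γ|]).mulVec x = 0 ↔
        ∃ c : ℝ, x = c • ![0, 0, 1, 0]) ∧
    (∀ (lam : ℝ) (x : Fin 4 → ℝ),
      (Matrix.diagonal ![ε * (σ * deriv f u), ε / α, 0, ε * |γ|]).mulVec x = 0 →
      (!![σ * (deriv f u) ^ 2, deriv f u, 0, 0;
          deriv f u,           σ,         0, 0;
          0,                   0,         0, -|γ|;
          0,                   0,         -|γ|, 0] : Matrix (Fin 4) (Fin 4) ℝ).mulVec x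
        = lam • x →
      x = 0) :=
  shizuta_kawashima_condition_general α γ ε σ hα hγ hε hσ f u hfu
end

section
/- Fix real numbers α > 0, β > 0, γ ≠ 0; set σ = sgn(γ) ∈ {−1, 1} and v = √(|γ|/β). Let f : ℝ → ℝ be differentiable. Define the flux map 𝐟(u, ψ, w, p) = (f(u) + σψ, α(f(u) + σψ), −v² p, −w) on ℝ⁴. Then for all U = (u₁, ψ₁, w₁, p₁) and V = (u₂, ψ₂, w₂, p₂) in ℝ⁴, the vector identity ∇²E^α(V) · (𝐟(U) − 𝐟(V) − A(u₂)(U − V)) = (f(u₁) − f(u₂) − f'(u₂)(u₁ − u₂)) · (σ f'(u₂), 1, 0, 0)ᵀ holds, where ∇²E^α(V) = diag(σ f'(u₂), 1/α, β, |γ|) and A(u₂) is the flux Jacobian at u₂. -/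
/-- The flux map of the first-order hyperbolic approximate system. -/
noncomputable def fluxMap (α σ v : ℝ) (f : ℝ → ℝ) (U : Fin 4 → ℝ) : Fin 4 → ℝ :=
  ![f (U 0) + σ * U 1, α * (f (U 0) + σ * U 1), -v ^ 2 * U 3, -U 2]

/- The flux is affine in `(ψ, w, p)` and `fluxJacobian` is its exact Jacobian there, so only the
Taylor remainder of `f` survives. -/
theorem fluxMap_sub_sub_fluxJacobian_mulVec (α σ v : ℝ) (f : ℝ → ℝ) (U V : Fin 4 → ℝ) :
    fluxMap α σ v f U - fluxMap α σ v f V - (fluxJacobian α σ v f (V 0)).mulVec (U - V)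
      = (f (U 0) - f (V 0) - deriv f (V 0) * (U 0 - V 0)) • ![1, α, 0, 0] := by
  ext i
  fin_cases i <;>
    simp [fluxMap, fluxJacobian, dotProduct, Fin.sum_univ_four] <;> ring

theorem relative_flux_remainder_identity_general
    (α β γ σ v : ℝ) (hα : 0 < α)
    (f : ℝ → ℝ)
    (u₁ ψ₁ w₁ p₁ u₂ ψ₂ w₂ p₂ : ℝ) :
    (Matrix.diagonal ![σ * deriv f u₂, 1 / α, β, |γ|]).mulVec
        (fluxMap α σ v f ![u₁, ψ₁, w₁, p₁] - fluxMap α σ v f ![u₂, ψ₂, w₂, p₂]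
          - (fluxJacobian α σ v f u₂).mulVec (![u₁, ψ₁, w₁, p₁] - ![u₂, ψ₂, w₂, p₂]))
      = (f u₁ - f u₂ - deriv f u₂ * (u₁ - u₂)) • ![σ * deriv f u₂, 1, 0, 0] := by
  have hdiag : (Matrix.diagonal ![σ * deriv f u₂, 1 / α, β, |γ|]).mulVec ![1, α, 0, 0]
      = ![σ * deriv f u₂, 1, 0, 0] := by
    ext i
    rw [Matrix.mulVec_diagonal]
    fin_cases i <;> simp [hα.ne']
  have hrem := fluxMap_sub_sub_fluxJacobian_mulVec α σ v f ![u₁, ψ₁, w₁, p₁] ![u₂, ψ₂, w₂, p₂]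
  simp only [Matrix.cons_val_zero] at hrem
  rw [hrem, Matrix.mulVec_smul, hdiag]

/-- the quadratic flux remainder identity
`∇²E^α(V) (𝐟(U) − 𝐟(V) − A(u₂)(U − V))
  = (f(u₁) − f(u₂) − f'(u₂)(u₁ − u₂)) (σ f'(u₂), 1, 0, 0)ᵀ`. -/
theorem relative_flux_remainder_identity
    (α β γ σ v : ℝ) (hα : 0 < α) (hβ : 0 < β) (hγ : γ ≠ 0)
    (hσ : σ = Real.sign γ) (hv : v = Real.sqrt (|γ| / β))
    (f : ℝ → ℝ) (hf : Differentiable ℝ f)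
    (u₁ ψ₁ w₁ p₁ u₂ ψ₂ w₂ p₂ : ℝ) :
    (Matrix.diagonal ![σ * deriv f u₂, 1 / α, β, |γ|]).mulVec
        (fluxMap α σ v f ![u₁, ψ₁, w₁, p₁] - fluxMap α σ v f ![u₂, ψ₂, w₂, p₂]
          - (fluxJacobian α σ v f u₂).mulVec (![u₁, ψ₁, w₁, p₁] - ![u₂, ψ₂, w₂, p₂]))
      = (f u₁ - f u₂ - deriv f u₂ * (u₁ - u₂)) • ![σ * deriv f u₂, 1, 0, 0] :=
  relative_flux_remainder_identity_general α β γ σ v hα f u₁ ψ₁ w₁ p₁ u₂ ψ₂ w₂ p₂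
end
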